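/- Let P be a tower of height δ, δ inaccessible, and suppose P is the direct limit tower on V_δ (F_X is a normal filter on P(X) for each X ∈ V_δ, with coherent projections). Then there is a stationary set S ⊆ P(V_δ) such that for every X ∈ V_δ, the club filter on P(V_δ) restricted to S projects to F_X; explicitly, S = {a ⊆ V_δ : ∀X ∈ a, ∀C ∈ F_X ∩ a, a ∩ X ∈ C} works, i.e., for every X ∈ V_δ and f : V_δ^{<ω} → V_δ, {(a ∩ X) : a ∈ cl_f ∩ S} ∈ F_X. -/

import Mathlib

/-! For `X ∈ V_δ` and `f`, choose `α < δ` with `X ∈ V_α`, `ω ⊆ V_α` and `V_α` closed under `f`: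
iterating the rank bound of `f` on `V_β` stays below `δ` because `|V_β| < δ` for `β < δ` and `δ`
is regular. For `Y = V_α`, normality and fineness make closure under `f` an `F_Y`-large property
(arity by arity, then by countable completeness), and together with the projection of `F_Y` to
`F_Z` for `Z ∈ Y` so is the diagonal condition defining `S`. Projecting to `X` gives the second
claim; the first is the case `X = ∅`, since `F_∅` is proper. -/

universe u

/-- `F` is a normal filter on `𝒫(X)` for a set `X` (in the ZF universe): a proper
filter on the powerset of `X` that is fine and closed under diagonal intersections. -/
structure IsNormalFilterZ (X : ZFSet.{u}) (F : Set ZFSet.{u}) : Prop where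
  mem_sub : ∀ A ∈ F, A ⊆ X.powerset
  inter_mem : ∀ A ∈ F, ∀ B ∈ F, A ∩ B ∈ F
  superset_mem : ∀ A ∈ F, ∀ B : ZFSet.{u}, A ⊆ B → B ⊆ X.powerset → B ∈ F
  proper : (∅ : ZFSet.{u}) ∉ F
  fine : ∀ x ∈ X, ZFSet.sep (fun a => x ∈ a) X.powerset ∈ F
  normal : ∀ A : ZFSet.{u} → ZFSet.{u}, (∀ x ∈ X, A x ∈ F) →
    ZFSet.sep (fun a => ∀ x ∈ a, a ∈ A x) X.powerset ∈ F

/-- A tower of normal filters of height `δ`: each `X ∈ V_δ` (i.e. of rank `< δ`)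
carries a normal filter `F X` on `𝒫(X)`, and for `X ⊆ Y` the filter `F Y` projects
to `F X` (`B ∈ F X` iff `{a ⊆ Y : a ∩ X ∈ B} ∈ F Y`). -/
structure TowerZ (δ : Ordinal.{u}) where
  F : ZFSet.{u} → Set ZFSet.{u}
  normal : ∀ X : ZFSet.{u}, X.rank < δ → IsNormalFilterZ X (F X)
  projects : ∀ X Y : ZFSet.{u}, X.rank < δ → Y.rank < δ → X ⊆ Y →
    ∀ B : ZFSet.{u}, B ⊆ X.powerset →
      (B ∈ F X ↔ ZFSet.sep (fun a => a ∩ X ∈ B) Y.powerset ∈ F Y)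

/-- The tower ordering: `p ≤ q` iff `⋃ p ⊇ ⋃ q` and every `a ∈ p` satisfies
`a ∩ ⋃ q ∈ q`. -/
def Tle (p q : ZFSet.{u}) : Prop :=
  ZFSet.sUnion q ⊆ ZFSet.sUnion p ∧ ∀ a ∈ p, a ∩ ZFSet.sUnion q ∈ q

namespace TowerZ

variable {δ : Ordinal.{u}} (T : TowerZ δ)

/-- `S` is `F X`-positive: a subset of `𝒫(X)` whose complement in `𝒫(X)` is not
in `F X`. -/
def Pos (X S : ZFSet.{u}) : Prop :=
  S ⊆ X.powerset ∧ ZFSet.sep (fun a => a ∉ S) X.powerset ∉ T.F X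

/-- The conditions of the tower: the sets in `V_δ` positive for some `F X`. -/
def Cond (S : ZFSet.{u}) : Prop :=
  ∃ X : ZFSet.{u}, X.rank < δ ∧ T.Pos X S

/-- Compatibility in the tower ordering. -/
def Compat (p q : ZFSet.{u}) : Prop :=
  ∃ r : ZFSet.{u}, T.Cond r ∧ Tle r p ∧ Tle r q

/-- `A` is a maximal antichain of the tower. -/
def MaxAC (A : Set ZFSet.{u}) : Prop :=
  (∀ p ∈ A, T.Cond p) ∧ (∀ p ∈ A, ∀ q ∈ A, p ≠ q → ¬ T.Compat p q) ∧
  (∀ p : ZFSet.{u}, T.Cond p → ∃ q ∈ A, T.Compat p q)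

/-- `G` is a generic filter on the tower: a filter on the poset of conditions
meeting every maximal antichain (of the ground model). -/
def Generic (G : Set ZFSet.{u}) : Prop :=
  (∀ p ∈ G, T.Cond p) ∧
  (∀ p ∈ G, ∀ q : ZFSet.{u}, T.Cond q → Tle p q → q ∈ G) ∧
  (∀ p ∈ G, ∀ q ∈ G, ∃ r ∈ G, Tle r p ∧ Tle r q) ∧
  (∀ A : Set ZFSet.{u}, T.MaxAC A → ∃ p ∈ A, p ∈ G)

/-- `p` forces `q ∈ G`: every condition below `p` is compatible with `q`. -/
def Forces (p q : ZFSet.{u}) : Prop :=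
  ∀ r : ZFSet.{u}, T.Cond r → Tle r p → T.Compat r q

end TowerZ

/-- `p` and `q` are disjoint conditions: for any `Z ∈ V_δ` containing `⋃ p` and
`⋃ q`, no `a ⊆ Z` satisfies both `a ∩ ⋃ p ∈ p` and `a ∩ ⋃ q ∈ q`. -/
def Disj (δ : Ordinal.{u}) (p q : ZFSet.{u}) : Prop :=
  ∀ Z : ZFSet.{u}, Z.rank < δ → ZFSet.sUnion p ⊆ Z → ZFSet.sUnion q ⊆ Z →
    ∀ a ∈ Z.powerset, ¬ (a ∩ ZFSet.sUnion p ∈ p ∧ a ∩ ZFSet.sUnion q ∈ q)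

/-- The diagonal stationary set `S = {a ⊆ V_δ : ∀ X ∈ a, ∀ C ∈ F_X ∩ a, a ∩ X ∈ C}`. -/
def SdiagZ (δ : Ordinal.{u}) (T : TowerZ δ) : Set ZFSet.{u} :=
  {a : ZFSet.{u} | (∀ x ∈ a, x.rank < δ) ∧
    ∀ X ∈ a, ∀ C ∈ a, C ∈ T.F X → a ∩ X ∈ C}


open ZFSet Ordinal Cardinal

/-- `b ∈ cl_g` -/
def ZFSet.IsClosedUnder (g : List ZFSet.{u} → ZFSet.{u}) (b : ZFSet.{u}) : Prop :=
  ∀ l : List ZFSet.{u}, (∀ x ∈ l, x ∈ b) → g l ∈ b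

namespace IsNormalFilterZ

variable {X : ZFSet.{u}} {F : Set ZFSet.{u}} (hF : IsNormalFilterZ X F)
include hF

theorem powerset_mem : X.powerset ∈ F :=
  hF.superset_mem _ (hF.normal _ hF.fine) _ sep_subset subset_rfl

theorem nonempty_of_mem {A : ZFSet.{u}} (hA : A ∈ F) : A.Nonempty :=
  (eq_empty_or_nonempty A).resolve_left fun h => hF.proper (h ▸ hA)

theorem sep_mem_of_forall {A : ZFSet.{u}} {p : ZFSet.{u} → Prop} (hA : A ∈ F)
    (h : ∀ b ∈ A, p b) : X.powerset.sep p ∈ F :=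
  hF.superset_mem _ hA _ (fun b hb => mem_sep.2 ⟨hF.mem_sub A hA hb, h b hb⟩) sep_subset

theorem sep_mono {p q : ZFSet.{u} → Prop} (hp : X.powerset.sep p ∈ F)
    (hpq : ∀ b, p b → q b) : X.powerset.sep q ∈ F :=
  hF.sep_mem_of_forall hp fun b hb => hpq b (mem_sep.1 hb).2

theorem sep_forall_mem_mem {p : ZFSet.{u} → ZFSet.{u} → Prop}
    (hp : ∀ x ∈ X, X.powerset.sep (p x) ∈ F) :
    X.powerset.sep (fun b => ∀ x ∈ b, p x b) ∈ F :=
  hF.sep_mono (hF.normal _ hp) fun _ hb x hx => (mem_sep.1 (hb x hx)).2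

/-- Countable completeness. The `n`-th set of the diagonal intersection also asks for
`n + 1 ∈ b`, so that fineness at `0` propagates to every natural number. -/
theorem sep_forall_nat_mem (hω : ∀ n : ℕ, (n : Ordinal).toZFSet ∈ X)
    {p : ℕ → ZFSet.{u} → Prop} (hp : ∀ n, X.powerset.sep (p n) ∈ F) :
    X.powerset.sep (fun b => ∀ n, p n b) ∈ F := by
  let q : ZFSet.{u} → ZFSet.{u} → Prop := fun x b =>
    ∀ n : ℕ, x = (n : Ordinal).toZFSet → p n b ∧ ((n + 1 : ℕ) : Ordinal).toZFSet ∈ b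
  have hq : ∀ x ∈ X, X.powerset.sep (q x) ∈ F := by
    intro x _
    by_cases hx : ∃ n : ℕ, x = (n : Ordinal).toZFSet
    · obtain ⟨n, rfl⟩ := hx
      refine hF.sep_mem_of_forall (hF.inter_mem _ (hp n) _ (hF.fine _ (hω (n + 1)))) ?_
      intro b hb m hm
      obtain rfl : n = m := Nat.cast_injective (toZFSet_injective hm)
      simp only [mem_inter, mem_sep] at hb
      exact ⟨hb.1.2, hb.2.2⟩
    · exact hF.sep_mem_of_forall hF.powerset_mem fun b _ n hn => absurd ⟨n, hn⟩ hx
  refine hF.sep_mem_of_forall (hF.inter_mem _ (hF.sep_forall_mem_mem hq) _ (hF.fine _ (hω 0)))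
    fun b hb => ?_
  simp only [mem_inter, mem_sep] at hb
  obtain ⟨⟨-, hdiag⟩, -, h0⟩ := hb
  have hnat : ∀ n : ℕ, (n : Ordinal).toZFSet ∈ b := by
    intro n
    induction n with
    | zero => exact h0
    | succ n ih => exact (hdiag _ ih n rfl).2
  exact fun n => (hdiag _ (hnat n) n rfl).1

theorem sep_isClosedUnder_length_mem {g : List ZFSet.{u} → ZFSet.{u}} (hg : X.IsClosedUnder g)
    (n : ℕ) :
    X.powerset.sep (fun b => ∀ l : List ZFSet.{u}, l.length = n →
      (∀ x ∈ l, x ∈ b) → g l ∈ b) ∈ F := by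
  induction n generalizing g with
  | zero =>
    refine hF.sep_mem_of_forall (hF.fine _ (hg [] (by simp))) fun b hb l hl _ => ?_
    rw [List.length_eq_zero_iff.1 hl]
    exact (mem_sep.1 hb).2
  | succ n ih =>
    have hcons : ∀ x ∈ X, X.IsClosedUnder (fun l => g (x :: l)) := fun x hx l hl =>
      hg _ fun y hy => (List.mem_cons.1 hy).elim (· ▸ hx) (hl y)
    refine hF.sep_mono (hF.sep_forall_mem_mem fun x hx => ih (hcons x hx)) ?_
    rintro b hb (_ | ⟨x, t⟩) hl hlb
    · simp at hl
    · exact hb x (hlb x List.mem_cons_self) t (by simpa using hl)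
        fun y hy => hlb y (List.mem_cons_of_mem _ hy)

theorem sep_isClosedUnder_mem (hω : ∀ n : ℕ, (n : Ordinal).toZFSet ∈ X)
    {g : List ZFSet.{u} → ZFSet.{u}} (hg : X.IsClosedUnder g) :
    X.powerset.sep (IsClosedUnder g) ∈ F :=
  hF.sep_mono (hF.sep_forall_nat_mem hω (hF.sep_isClosedUnder_length_mem hg))
    fun _ hb l hl => hb l.length l rfl hl

end IsNormalFilterZ

theorem TowerZ.sep_diag_mem {δ : Ordinal.{u}} (T : TowerZ δ) {Y : ZFSet.{u}}
    (hY : Y.rank < δ) (hYt : Y.IsTransitive) :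
    Y.powerset.sep (fun b => ∀ Z ∈ b, ∀ C ∈ b, C ∈ T.F Z → b ∩ Z ∈ C) ∈ T.F Y := by
  have N := T.normal Y hY
  refine N.sep_forall_mem_mem fun Z hZ => N.sep_forall_mem_mem fun C _ => ?_
  by_cases hC : C ∈ T.F Z
  · have hZδ : Z.rank < δ := (rank_lt_of_mem hZ).trans hY
    have hproj := (T.projects Z Y hZδ hY (hYt.subset_of_mem hZ) C
      ((T.normal Z hZδ).mem_sub C hC)).1 hC
    exact N.sep_mono hproj fun _ hb _ => hb
  · exact N.sep_mem_of_forall N.powerset_mem fun _ _ h => absurd h hC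

theorem exists_map_shrink_eq {s : ZFSet.{u}} {l : List ZFSet.{u}} (hl : ∀ x ∈ l, x ∈ s) :
    ∃ l' : List (Shrink.{u} s), l'.map (fun w => ((equivShrink s).symm w : ZFSet)) = l :=
  ⟨l.attach.map fun x => equivShrink s ⟨x.1, hl x.1 x.2⟩, by simp⟩

section ClosingOrdinal

variable (f : List ZFSet.{u} → ZFSet.{u})

/-- The lists range over `Shrink (V_ β)` so that the supremum is over a `u`-small type; over a
large index type it could be a junk value. -/
noncomputable def closureRank (β : Ordinal.{u}) : Ordinal.{u} :=
  ⨆ l : List (Shrink.{u} (V_ β)),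
    (f (l.map fun w => ((equivShrink (V_ β)).symm w : ZFSet))).rank + 1

theorem rank_lt_closureRank {β : Ordinal.{u}} {l : List ZFSet.{u}}
    (hl : ∀ x ∈ l, x ∈ V_ β) :
    (f l).rank < closureRank f β := by
  obtain ⟨l', rfl⟩ := exists_map_shrink_eq hl
  exact (lt_add_one _).trans_le (Ordinal.le_iSup _ l')

noncomputable def closingOrdinal (β : Ordinal.{u}) : Ordinal.{u} :=
  nfp (fun γ => max γ (closureRank f γ)) β

theorem le_closingOrdinal (β : Ordinal.{u}) : β ≤ closingOrdinal f β :=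
  le_nfp _ β

theorem isClosedUnder_vonNeumann_closingOrdinal (β : Ordinal.{u}) :
    (V_ (closingOrdinal f β)).IsClosedUnder f := by
  intro l hl
  set g : Ordinal.{u} → Ordinal.{u} := fun γ => max γ (closureRank f γ)
  have hmono : Monotone fun n => g^[n] β :=
    fun _ _ hnm => Function.monotone_iterate_of_id_le (fun γ => le_max_left γ _) hnm β
  have hstage : ∀ᶠ n in Filter.atTop, ∀ x ∈ {x | x ∈ l}, x ∈ V_ (g^[n] β) := by
    refine (List.finite_toSet l).eventually_all.2 fun x hx => ?_
    obtain ⟨n, hn⟩ := lt_nfp_iff.1 (mem_vonNeumann.1 (hl x hx))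
    exact Filter.eventually_atTop.2 ⟨n, fun m hm => mem_vonNeumann.2 (hn.trans_le (hmono hm))⟩
  obtain ⟨n, hn⟩ := hstage.exists
  refine mem_vonNeumann.2 ((rank_lt_closureRank f hn).trans_le ?_)
  calc closureRank f (g^[n] β) ≤ g^[n + 1] β := by
        rw [Function.iterate_succ_apply']; exact le_max_right _ _
    _ ≤ closingOrdinal f β := iterate_le_nfp g β (n + 1)

variable {κ : Cardinal.{u}} (hκ : κ.IsInaccessible)
  (hf : ∀ l : List ZFSet.{u}, (∀ x ∈ l, x.rank < κ.ord) → (f l).rank < κ.ord)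
include hκ hf

theorem closureRank_lt {β : Ordinal.{u}} (hβ : β < κ.ord) : closureRank f β < κ.ord := by
  refine Ordinal.iSup_lt_of_lt_cof ?_ fun l => ?_
  · rw [hκ.isRegular.cof_ord]
    refine (mk_list_le_max _).trans_lt (max_lt hκ.1 ?_)
    change (V_ β).card < κ
    rw [card_vonNeumann, ← hκ.preBeth_ord]
    exact preBeth_lt_preBeth.2 hβ
  · refine (isSuccLimit_ord hκ.1.le).add_one_lt (hf _ fun x hx => ?_)
    obtain ⟨w, -, rfl⟩ := List.mem_map.1 hx
    exact (mem_vonNeumann.1 ((equivShrink (V_ β)).symm w).2).trans hβ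

theorem closingOrdinal_lt {β : Ordinal.{u}} (hβ : β < κ.ord) : closingOrdinal f β < κ.ord :=
  nfp_lt_ord_of_isRegular hκ.isRegular hκ.1.ne'
    (fun _ hγ => max_lt hγ (closureRank_lt f hκ hf hγ)) hβ

end ClosingOrdinal

theorem TowerZ.sep_restrict_mem {κ : Cardinal.{u}} (hκ : κ.IsInaccessible) (T : TowerZ κ.ord)
    {X : ZFSet.{u}} (hX : X.rank < κ.ord) {f : List ZFSet.{u} → ZFSet.{u}}
    (hf : ∀ l : List ZFSet.{u}, (∀ x ∈ l, x.rank < κ.ord) → (f l).rank < κ.ord) :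
    X.powerset.sep (fun z => ∃ a ∈ SdiagZ κ.ord T, a.IsClosedUnder f ∧ z = a ∩ X) ∈ T.F X := by
  set α := closingOrdinal f (max (X.rank + 1) ω)
  have hα : α < κ.ord := closingOrdinal_lt f hκ hf
    (max_lt ((isSuccLimit_ord hκ.1.le).add_one_lt hX) (omega0_lt_ord.2 hκ.1))
  have hβα : max (X.rank + 1) ω ≤ α := le_closingOrdinal f _
  have hY : (V_ α).rank < κ.ord := (rank_vonNeumann α).trans_lt hα
  have hXY : X ⊆ V_ α := subset_vonNeumann.2 (le_self_add.trans ((le_max_left _ _).trans hβα))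
  have hω : ∀ n : ℕ, (n : Ordinal).toZFSet ∈ V_ α := fun n => mem_vonNeumann.2 <| by
    rw [rank_toZFSet]; exact (natCast_lt_omega0 n).trans_le ((le_max_right _ _).trans hβα)
  have N := T.normal _ hY
  have hcl := N.sep_isClosedUnder_mem hω (isClosedUnder_vonNeumann_closingOrdinal f _)
  have hdiag := T.sep_diag_mem hY (isTransitive_vonNeumann α)
  refine (T.projects X (V_ α) hX hY hXY _ sep_subset).2
    (N.sep_mem_of_forall (N.inter_mem _ hcl _ hdiag) fun b hb => ?_)
  simp only [mem_inter, mem_sep, mem_powerset] at hb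
  obtain ⟨⟨hbY, hbcl⟩, -, hbdiag⟩ := hb
  have hbδ : ∀ x ∈ b, x.rank < κ.ord := fun x hx => (mem_vonNeumann.1 (hbY hx)).trans hα
  exact mem_sep.2 ⟨mem_powerset.2 fun _ hx => (mem_inter.1 hx).2, b, ⟨hbδ, hbdiag⟩, hbcl, rfl⟩

/-- Let `P` be a tower on `V_δ`, `δ` inaccessible (`δ = κ.ord`).  Then the set
`S = {a ⊆ V_δ : ∀ X ∈ a, ∀ C ∈ F_X ∩ a, a ∩ X ∈ C}` is stationary in `𝒫(V_δ)`
(it meets every club `cl_f`), and for every `X ∈ V_δ` the club filter on `𝒫(V_δ)`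
restricted to `S` projects to `F_X`: for every `f : V_δ^{<ω} → V_δ`,
`{a ∩ X : a ∈ cl_f ∩ S} ∈ F_X`. -/
theorem stmt15 (κ : Cardinal.{u}) (hκ : κ.IsInaccessible) (T : TowerZ κ.ord) :
    (∀ f : List ZFSet.{u} → ZFSet.{u},
      (∀ l : List ZFSet.{u}, (∀ x ∈ l, x.rank < κ.ord) → (f l).rank < κ.ord) →
      ∃ a ∈ SdiagZ κ.ord T, ∀ l : List ZFSet.{u}, (∀ x ∈ l, x ∈ a) → f l ∈ a) ∧
    (∀ X : ZFSet.{u}, X.rank < κ.ord →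
      ∀ f : List ZFSet.{u} → ZFSet.{u},
        (∀ l : List ZFSet.{u}, (∀ x ∈ l, x.rank < κ.ord) → (f l).rank < κ.ord) →
        ∃ B ∈ T.F X, ∀ z : ZFSet.{u},
          z ∈ B ↔ ∃ a ∈ SdiagZ κ.ord T,
            (∀ l : List ZFSet.{u}, (∀ x ∈ l, x ∈ a) → f l ∈ a) ∧ z = a ∩ X) := by
  refine ⟨fun f hf => ?_, fun X hX f hf => ⟨_, T.sep_restrict_mem hκ hX hf, fun z => ?_⟩⟩
  · have h0 : (∅ : ZFSet.{u}).rank < κ.ord := by rw [rank_empty]; exact ord_pos.2 hκ.pos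
    obtain ⟨z, hz⟩ :=
      (nonempty_def _).1 <| (T.normal ∅ h0).nonempty_of_mem (T.sep_restrict_mem hκ h0 hf)
    obtain ⟨a, ha, hcl, -⟩ := (mem_sep.1 hz).2
    exact ⟨a, ha, hcl⟩
  · rw [mem_sep, mem_powerset]
    refine ⟨And.right, fun hz => ⟨?_, hz⟩⟩
    obtain ⟨a, -, -, rfl⟩ := hz
    exact fun _ hx => (mem_inter.1 hx).2
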